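/- Let n, μ be natural numbers with μ ≥ 1 and n ≥ 1. If a function f : Fin k → Fin n has exactly μ repeat positions, then μ + 1 ≤ k ≤ n + μ; moreover, the set of pairs (k, f) where k is a natural number and f : Fin k → Fin n has exactly μ repeat positions is finite, with cardinality ∑_{k=μ+1}^{n+μ} ∑_{λ=0}^{μ} Z(k,n,μ+λ,λ). -/

import Mathlib

open Finset

/-- The set of "matching" positions of `f`: positions `i` such that some other
position `j ≠ i` has the same color, `f j = f i`. -/
def matchingSet {k n : ℕ} (f : Fin k → Fin n) : Finset (Fin k) :=
  Finset.univ.filter (fun i => ∃ j, j ≠ i ∧ f j = f i)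

/-- The set of "repeat" positions of `f`: positions `i` such that some earlier
position `j < i` has the same color, `f j = f i`. -/
def repeatSet {k n : ℕ} (f : Fin k → Fin n) : Finset (Fin k) :=
  Finset.univ.filter (fun i => ∃ j, j < i ∧ f j = f i)

/-- The set of "repeated" colors of `f`: colors used by at least two positions. -/
def repeatedColors {k n : ℕ} (f : Fin k → Fin n) : Finset (Fin n) :=
  Finset.univ.filter (fun c => 2 ≤ (Finset.univ.filter (fun i => f i = c)).card)

/-- `Z k n m l` is the number of sequences of `k` balls colored with at most `n`
colors having exactly `m` matching positions and exactly `l` repeated colors. -/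
def Z (k n m l : ℕ) : ℕ :=
  Fintype.card {f : Fin k → Fin n // (matchingSet f).card = m ∧ (repeatedColors f).card = l}

/-- `dsurj m l` is the number of doubly surjective functions `Fin m → Fin l`,
i.e. functions for which every element of `Fin l` has at least two preimages. -/
def dsurj (m l : ℕ) : ℕ :=
  Fintype.card {g : Fin m → Fin l // ∀ c : Fin l, 2 ≤ (Finset.univ.filter (fun i => g i = c)).card}

/-!
Everything is read off the color classes `{i | f i = c}`. In a class of size `d` the repeat
positions are all but the first one (`d - 1` of them), the matching positions are all `d` of
them when `d ≥ 2` and none otherwise, and `c` is a repeated color iff `d ≥ 2`. Summing over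
the colors, #matching = #repeats + #repeated colors and #repeated colors ≤ #repeats, so a
function with `μ` repeats has between `μ` and `2μ` matching positions; and
`k = #repeats + #colors used`, which pins `k` between `μ + 1` and `n + μ`.
-/

section ColorClasses

variable {k n : ℕ} (f : Fin k → Fin n)

theorem filter_repeatSet_eq_erase_min' (c : Fin n)
    (h : ({i | f i = c} : Finset (Fin k)).Nonempty) :
    (repeatSet f).filter (f · = c) = ({i | f i = c} : Finset (Fin k)).erase (min' _ h) := by
  have hmin := min'_mem _ h
  simp only [mem_filter, mem_univ, true_and] at hmin
  ext i
  simp only [repeatSet, mem_filter, mem_univ, true_and, mem_erase]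
  constructor
  · rintro ⟨⟨j, hji, hj⟩, hi⟩
    refine ⟨(lt_of_le_of_lt (min'_le _ j ?_) hji).ne', hi⟩
    simp [hj, hi]
  · rintro ⟨hne, hi⟩
    refine ⟨⟨_, lt_of_le_of_ne (min'_le _ i ?_) (Ne.symm hne), by rw [hmin, hi]⟩, hi⟩
    simp [hi]

theorem card_filter_repeatSet (c : Fin n) :
    #((repeatSet f).filter (f · = c)) = #{i | f i = c} - 1 := by
  rcases (({i | f i = c} : Finset (Fin k))).eq_empty_or_nonempty with h | h
  · have := filter_subset_filter (f · = c) (subset_univ (repeatSet f))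
    rw [h, subset_empty] at this
    rw [this, h]
    rfl
  · rw [filter_repeatSet_eq_erase_min' f c h, card_erase_of_mem (min'_mem _ h)]

theorem mem_matchingSet_iff (i : Fin k) : i ∈ matchingSet f ↔ 2 ≤ #{j | f j = f i} := by
  simp only [matchingSet, mem_filter, mem_univ, true_and]
  constructor
  · rintro ⟨j, hji, hj⟩
    exact one_lt_card_iff.mpr ⟨j, i, by simp [hj], by simp, hji⟩
  · intro h
    obtain ⟨j, hj, hji⟩ := exists_mem_ne h i
    exact ⟨j, hji, (mem_filter.mp hj).2⟩

theorem card_filter_matchingSet (c : Fin n) :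
    #((matchingSet f).filter (f · = c)) = if 2 ≤ #{i | f i = c} then #{i | f i = c} else 0 := by
  have : (matchingSet f).filter (f · = c) =
      ({i | f i = c} : Finset (Fin k)).filter (fun _ => 2 ≤ #{i | f i = c}) := by
    ext i
    simp only [mem_filter, mem_univ, true_and, mem_matchingSet_iff]
    constructor
    · rintro ⟨h, rfl⟩
      exact ⟨rfl, h⟩
    · rintro ⟨rfl, h⟩
      exact ⟨h, rfl⟩
  rw [this, filter_const]
  split_ifs <;> rfl

theorem card_repeatSet_eq_sum : #(repeatSet f) = ∑ c, (#{i | f i = c} - 1) := by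
  rw [card_eq_sum_card_fiberwise (f := f) (t := univ) fun _ _ => mem_univ _]
  exact sum_congr rfl fun c _ => card_filter_repeatSet f c

theorem card_matchingSet_eq_sum :
    #(matchingSet f) = ∑ c, if 2 ≤ #{i | f i = c} then #{i | f i = c} else 0 := by
  rw [card_eq_sum_card_fiberwise (f := f) (t := univ) fun _ _ => mem_univ _]
  exact sum_congr rfl fun c _ => card_filter_matchingSet f c

theorem card_repeatedColors_eq_sum :
    #(repeatedColors f) = ∑ c, if 2 ≤ #{i | f i = c} then 1 else 0 :=
  card_filter _ _

theorem card_matchingSet_eq_card_repeatSet_add :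
    #(matchingSet f) = #(repeatSet f) + #(repeatedColors f) := by
  rw [card_matchingSet_eq_sum, card_repeatSet_eq_sum, card_repeatedColors_eq_sum,
    ← sum_add_distrib]
  refine sum_congr rfl fun c _ => ?_
  split_ifs <;> omega

theorem card_repeatedColors_le_card_repeatSet : #(repeatedColors f) ≤ #(repeatSet f) := by
  rw [card_repeatSet_eq_sum, card_repeatedColors_eq_sum]
  refine sum_le_sum fun c _ => ?_
  split_ifs <;> omega

theorem card_repeatSet_add_card_image : #(repeatSet f) + #(univ.image f) = k := by
  calc #(repeatSet f) + #(univ.image f)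
      = ∑ c ∈ univ.image f, (#{i | f i = c} - 1 + 1) := by
        rw [card_eq_sum_card_fiberwise fun i _ => mem_image_of_mem f (mem_univ i),
          card_eq_sum_ones (univ.image f), ← sum_add_distrib]
        exact sum_congr rfl fun c _ => by rw [card_filter_repeatSet]
    _ = ∑ c ∈ univ.image f, #{i | f i = c} := sum_congr rfl fun c hc => by
        obtain ⟨i, -, rfl⟩ := mem_image.mp hc
        exact Nat.sub_add_cancel (card_pos.mpr ⟨i, by simp⟩)
    _ = k := by simpa using (card_eq_sum_card_image f univ).symm

theorem card_repeatSet_bounds (hf : 0 < #(repeatSet f)) :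
    #(repeatSet f) + 1 ≤ k ∧ k ≤ n + #(repeatSet f) := by
  have hk := card_repeatSet_add_card_image f
  obtain ⟨i, -⟩ := card_pos.mp hf
  have : 0 < #(univ.image f) := card_pos.mpr (univ_nonempty_iff.mpr ⟨i⟩ |>.image f)
  have : #(univ.image f) ≤ n := (card_le_univ _).trans_eq (Fintype.card_fin n)
  omega

end ColorClasses

theorem card_filter_card_repeatSet_eq_sum_Z (k n μ : ℕ) :
    #{f : Fin k → Fin n | #(repeatSet f) = μ} = ∑ l ∈ range (μ + 1), Z k n (μ + l) l := by
  rw [card_eq_sum_card_fiberwise (f := fun f => #(repeatedColors f)) (t := range (μ + 1))]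
  · refine sum_congr rfl fun l _ => ?_
    rw [Z, Fintype.card_subtype, filter_filter]
    congr 1
    ext f
    simp only [mem_filter, mem_univ, true_and]
    have := card_matchingSet_eq_card_repeatSet_add f
    constructor <;> rintro ⟨h, rfl⟩ <;> exact ⟨by omega, rfl⟩
  · intro f hf
    have := card_repeatedColors_le_card_repeatSet f
    simp only [coe_filter, mem_univ, true_and, Set.mem_ofPred_eq] at hf
    simp only [coe_range, Set.mem_Iio]
    omega

theorem stmt15_general (n μ : ℕ) (hμ : 1 ≤ μ) :
    (∀ (k : ℕ) (f : Fin k → Fin n), (repeatSet f).card = μ → μ + 1 ≤ k ∧ k ≤ n + μ) ∧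
    {p : (k : ℕ) × (Fin k → Fin n) | (repeatSet p.2).card = μ}.Finite ∧
    {p : (k : ℕ) × (Fin k → Fin n) | (repeatSet p.2).card = μ}.ncard =
      ∑ k ∈ Finset.Icc (μ + 1) (n + μ),
        ∑ l ∈ Finset.range (μ + 1), Z k n (μ + l) l := by
  have bounds (k : ℕ) (f : Fin k → Fin n) (hf : #(repeatSet f) = μ) :
      μ + 1 ≤ k ∧ k ≤ n + μ :=
    hf ▸ card_repeatSet_bounds f (hf ▸ hμ)
  have hset : {p : (k : ℕ) × (Fin k → Fin n) | #(repeatSet p.2) = μ} =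
      ↑((Icc (μ + 1) (n + μ)).sigma
        fun k => ({f | #(repeatSet f) = μ} : Finset (Fin k → Fin n))) := by
    ext ⟨k, f⟩
    simp only [Set.mem_ofPred_eq, coe_sigma, Set.mem_sigma_iff, coe_Icc, Set.mem_Icc, coe_filter,
      mem_univ, true_and]
    exact ⟨fun h => ⟨bounds k f h, h⟩, And.right⟩
  refine ⟨bounds, hset ▸ finite_toSet _, ?_⟩
  rw [hset, Set.ncard_coe_finset, card_sigma]
  exact sum_congr rfl fun k _ => card_filter_card_repeatSet_eq_sum_Z k n μ

/-- for `n ≥ 1` and `μ ≥ 1`, any coloring of `k` balls with at most `n`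
colors with exactly `μ` repeat positions satisfies `μ + 1 ≤ k ≤ n + μ`; the set of all
pairs `(k, f)` with exactly `μ` repeat positions is finite, of cardinality
`∑_{k=μ+1}^{n+μ} ∑_{l=0}^{μ} Z(k,n,μ+l,l)`. -/
theorem stmt15 (n μ : ℕ) (hn : 1 ≤ n) (hμ : 1 ≤ μ) :
    (∀ (k : ℕ) (f : Fin k → Fin n), (repeatSet f).card = μ → μ + 1 ≤ k ∧ k ≤ n + μ) ∧
    {p : (k : ℕ) × (Fin k → Fin n) | (repeatSet p.2).card = μ}.Finite ∧
    {p : (k : ℕ) × (Fin k → Fin n) | (repeatSet p.2).card = μ}.ncard =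
      ∑ k ∈ Finset.Icc (μ + 1) (n + μ),
        ∑ l ∈ Finset.range (μ + 1), Z k n (μ + l) l :=
  stmt15_general n μ hμ
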